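/- Let L : ℝ × ℝ^n × ℝ^n → ℝ, (t,q,v) ↦ L(t,q,v), be a smooth Lagrangian, and let q : ℝ → ℝ^n be a smooth curve satisfying the Euler–Lagrange equations EL(L)[q](t) = 0 for all t. Suppose v, w : ℝ → ℝ^n are smooth solutions of the linearized Euler–Lagrange equations along q, i.e. d/dt[H_vv(t)·v'(t) + H_vq(t)·v(t)] = H_qv(t)·v'(t) + H_qq(t)·v(t) for all t (and the same equation with v replaced by w), where H_vv(t), H_vq(t), H_qv(t), H_qq(t) denote the second partial derivative matrices ∂²L/∂v∂v, ∂²L/∂v∂q, ∂²L/∂q∂v, ∂²L/∂q∂q evaluated at (t, q(t), q'(t)). Then the presymplectic pairing Ω(t) := ⟨v(t), H_vv(t)·w'(t) + H_vq(t)·w(t)⟩ − ⟨w(t), H_vv(t)·v'(t) + H_vq(t)·v(t)⟩ is constant in t. -/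

import Mathlib

open scoped ContDiff

/-- Partial derivative of `L (t,q,v)` with respect to the velocity component `v a`. -/
noncomputable def pV {n : ℕ} (L : ℝ → (Fin n → ℝ) → (Fin n → ℝ) → ℝ) (a : Fin n) :
    ℝ → (Fin n → ℝ) → (Fin n → ℝ) → ℝ :=
  fun t q v => deriv (fun s => L t q (Function.update v a s)) (v a)

/-- Partial derivative of `L (t,q,v)` with respect to the position component `q a`. -/
noncomputable def pQ {n : ℕ} (L : ℝ → (Fin n → ℝ) → (Fin n → ℝ) → ℝ) (a : Fin n) :
    ℝ → (Fin n → ℝ) → (Fin n → ℝ) → ℝ :=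
  fun t q v => deriv (fun s => L t (Function.update q a s) v) (q a)

/-- Component `a` of the Euler–Lagrange expression of `L` along the curve `q`:
`EL(L)[q](t)_a = d/dt[∂L/∂v_a(t, q(t), q'(t))] − ∂L/∂q_a(t, q(t), q'(t))`. -/
noncomputable def EL {n : ℕ} (L : ℝ → (Fin n → ℝ) → (Fin n → ℝ) → ℝ)
    (q : ℝ → Fin n → ℝ) (a : Fin n) (t : ℝ) : ℝ :=
  deriv (fun s => pV L a s (q s) (deriv q s)) t - pQ L a t (q t) (deriv q t)

/-- The Hessian matrix `H_vv(t)_{ab} = ∂²L/∂v_a∂v_b (t, q(t), q'(t))` along `q`. -/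
noncomputable def Hvv {n : ℕ} (L : ℝ → (Fin n → ℝ) → (Fin n → ℝ) → ℝ)
    (q : ℝ → Fin n → ℝ) (a b : Fin n) (t : ℝ) : ℝ :=
  pV (pV L a) b t (q t) (deriv q t)

/-- The Hessian matrix `H_vq(t)_{ab} = ∂²L/∂v_a∂q_b (t, q(t), q'(t))` along `q`. -/
noncomputable def Hvq {n : ℕ} (L : ℝ → (Fin n → ℝ) → (Fin n → ℝ) → ℝ)
    (q : ℝ → Fin n → ℝ) (a b : Fin n) (t : ℝ) : ℝ :=
  pQ (pV L a) b t (q t) (deriv q t)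

/-- The Hessian matrix `H_qv(t)_{ab} = ∂²L/∂q_a∂v_b (t, q(t), q'(t))` along `q`. -/
noncomputable def Hqv {n : ℕ} (L : ℝ → (Fin n → ℝ) → (Fin n → ℝ) → ℝ)
    (q : ℝ → Fin n → ℝ) (a b : Fin n) (t : ℝ) : ℝ :=
  pV (pQ L a) b t (q t) (deriv q t)

/-- The Hessian matrix `H_qq(t)_{ab} = ∂²L/∂q_a∂q_b (t, q(t), q'(t))` along `q`. -/
noncomputable def Hqq {n : ℕ} (L : ℝ → (Fin n → ℝ) → (Fin n → ℝ) → ℝ)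
    (q : ℝ → Fin n → ℝ) (a b : Fin n) (t : ℝ) : ℝ :=
  pQ (pQ L a) b t (q t) (deriv q t)

/-- The linearized momentum `(H_vv(t)·v'(t) + H_vq(t)·v(t))_a` of a variation `v`
along the curve `q`. -/
noncomputable def linMom {n : ℕ} (L : ℝ → (Fin n → ℝ) → (Fin n → ℝ) → ℝ)
    (q v : ℝ → Fin n → ℝ) (a : Fin n) (t : ℝ) : ℝ :=
  (∑ b, Hvv L q a b t * deriv v t b) + ∑ b, Hvq L q a b t * v t b

/-- A variation `v` solves the linearized Euler–Lagrange equations along `q`: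
`d/dt[H_vv(t)·v'(t) + H_vq(t)·v(t)] = H_qv(t)·v'(t) + H_qq(t)·v(t)`. -/
def IsLinearizedELSolution {n : ℕ} (L : ℝ → (Fin n → ℝ) → (Fin n → ℝ) → ℝ)
    (q v : ℝ → Fin n → ℝ) : Prop :=
  ∀ (a : Fin n) (t : ℝ),
    deriv (linMom L q v a) t =
      (∑ b, Hqv L q a b t * deriv v t b) + ∑ b, Hqq L q a b t * v t b

namespace PreSym

variable {n : ℕ}

noncomputable def unc (L : ℝ → (Fin n → ℝ) → (Fin n → ℝ) → ℝ) :
    ℝ × (Fin n → ℝ) × (Fin n → ℝ) → ℝ := fun p => L p.1 p.2.1 p.2.2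

def eV (a : Fin n) : ℝ × (Fin n → ℝ) × (Fin n → ℝ) := (0, 0, Pi.single a 1)
def eQ (a : Fin n) : ℝ × (Fin n → ℝ) × (Fin n → ℝ) := (0, Pi.single a 1, 0)

lemma hasDerivAt_update (y : Fin n → ℝ) (a : Fin n) (s₀ : ℝ) :
    HasDerivAt (fun s => Function.update y a s) (Pi.single a 1) s₀ := by
  rw [hasDerivAt_pi]
  intro b
  rcases eq_or_ne b a with rfl | hb
  · simp only [Function.update_self, Pi.single_eq_same]
    exact hasDerivAt_id' s₀
  · simp only [Function.update_of_ne hb, Pi.single_eq_of_ne hb]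
    exact hasDerivAt_const _ _

lemma pV_eq (L : ℝ → (Fin n → ℝ) → (Fin n → ℝ) → ℝ) (a : Fin n) (t : ℝ) (x y : Fin n → ℝ)
    (hF : DifferentiableAt ℝ (unc L) (t, x, y)) :
    pV L a t x y = fderiv ℝ (unc L) (t, x, y) (eV a) := by
  have hg : HasDerivAt (fun s => ((t, x, Function.update y a s) :
      ℝ × (Fin n → ℝ) × (Fin n → ℝ))) (eV a) (y a) :=
    (hasDerivAt_const _ _).prodMk ((hasDerivAt_const _ _).prodMk (hasDerivAt_update y a (y a)))
  have hF' : HasFDerivAt (unc L) (fderiv ℝ (unc L) (t, x, y))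
      (t, x, Function.update y a (y a)) := by
    rw [Function.update_eq_self]; exact hF.hasFDerivAt
  exact (hF'.comp_hasDerivAt (y a) hg).deriv

lemma pQ_eq (L : ℝ → (Fin n → ℝ) → (Fin n → ℝ) → ℝ) (a : Fin n) (t : ℝ) (x y : Fin n → ℝ)
    (hF : DifferentiableAt ℝ (unc L) (t, x, y)) :
    pQ L a t x y = fderiv ℝ (unc L) (t, x, y) (eQ a) := by
  have hg : HasDerivAt (fun s => ((t, Function.update x a s, y) :
      ℝ × (Fin n → ℝ) × (Fin n → ℝ))) (eQ a) (x a) :=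
    (hasDerivAt_const _ _).prodMk ((hasDerivAt_update x a (x a)).prodMk (hasDerivAt_const _ _))
  have hF' : HasFDerivAt (unc L) (fderiv ℝ (unc L) (t, x, y))
      (t, Function.update x a (x a), y) := by
    rw [Function.update_eq_self]; exact hF.hasFDerivAt
  exact (hF'.comp_hasDerivAt (x a) hg).deriv

variable {E : Type*} [NormedAddCommGroup E] [NormedSpace ℝ E]

lemma contDiff_fderiv_apply {F : E → ℝ} (hF : ContDiff ℝ (⊤ : ℕ∞) F) (u : E) :
    ContDiff ℝ (⊤ : ℕ∞) fun x => fderiv ℝ F x u :=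
  (hF.fderiv_right (by simp)).clm_apply contDiff_const

lemma fderiv_fderiv_apply {F : E → ℝ} (hF : ContDiff ℝ (⊤ : ℕ∞) F) (x u w : E) :
    fderiv ℝ (fun p => fderiv ℝ F p u) x w = fderiv ℝ (fderiv ℝ F) x w u := by
  have h1 : HasFDerivAt (fderiv ℝ F) (fderiv ℝ (fderiv ℝ F) x) x :=
    (((hF.fderiv_right (m := (⊤ : ℕ∞)) (by simp)).differentiable (by simp)) x).hasFDerivAt
  have h2 := ((ContinuousLinearMap.apply ℝ ℝ u).hasFDerivAt.comp x h1).fderiv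
  calc fderiv ℝ (fun p => fderiv ℝ F p u) x w
      = fderiv ℝ ((ContinuousLinearMap.apply ℝ ℝ u) ∘ (fderiv ℝ F)) x w := rfl
    _ = fderiv ℝ (fderiv ℝ F) x w u := by rw [h2]; rfl

lemma snd_symm {F : E → ℝ} (hF : ContDiff ℝ (⊤ : ℕ∞) F) (x u w : E) :
    fderiv ℝ (fderiv ℝ F) x u w = fderiv ℝ (fderiv ℝ F) x w u :=
  second_derivative_symmetric (fun y => ((hF.differentiable (by simp)) y).hasFDerivAt)
    ((((hF.fderiv_right (m := (⊤ : ℕ∞)) (by simp)).differentiable (by simp)) x).hasFDerivAt) u w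

lemma unc_pV (L : ℝ → (Fin n → ℝ) → (Fin n → ℝ) → ℝ) (hL : ContDiff ℝ (⊤ : ℕ∞) (unc L)) (a : Fin n) :
    unc (pV L a) = fun p => fderiv ℝ (unc L) p (eV a) := by
  funext p
  have := pV_eq L a p.1 p.2.1 p.2.2 ((hL.differentiable (by simp)) _)
  simpa [unc] using this

lemma unc_pQ (L : ℝ → (Fin n → ℝ) → (Fin n → ℝ) → ℝ) (hL : ContDiff ℝ (⊤ : ℕ∞) (unc L)) (a : Fin n) :
    unc (pQ L a) = fun p => fderiv ℝ (unc L) p (eQ a) := by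
  funext p
  have := pQ_eq L a p.1 p.2.1 p.2.2 ((hL.differentiable (by simp)) _)
  simpa [unc] using this

lemma Hvv_eq (L : ℝ → (Fin n → ℝ) → (Fin n → ℝ) → ℝ) (hL : ContDiff ℝ (⊤ : ℕ∞) (unc L))
    (q : ℝ → Fin n → ℝ) (a b : Fin n) (t : ℝ) :
    Hvv L q a b t = fderiv ℝ (fderiv ℝ (unc L)) (t, q t, deriv q t) (eV b) (eV a) := by
  have hdiff : DifferentiableAt ℝ (unc (pV L a)) (t, q t, deriv q t) := by
    rw [unc_pV L hL a]
    exact ((contDiff_fderiv_apply hL (eV a)).differentiable (by simp)) _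
  calc Hvv L q a b t = fderiv ℝ (unc (pV L a)) (t, q t, deriv q t) (eV b) :=
        pV_eq (pV L a) b t (q t) (deriv q t) hdiff
    _ = fderiv ℝ (fun p => fderiv ℝ (unc L) p (eV a)) (t, q t, deriv q t) (eV b) := by
        rw [unc_pV L hL a]
    _ = _ := fderiv_fderiv_apply hL _ _ _

lemma Hvq_eq (L : ℝ → (Fin n → ℝ) → (Fin n → ℝ) → ℝ) (hL : ContDiff ℝ (⊤ : ℕ∞) (unc L))
    (q : ℝ → Fin n → ℝ) (a b : Fin n) (t : ℝ) :
    Hvq L q a b t = fderiv ℝ (fderiv ℝ (unc L)) (t, q t, deriv q t) (eQ b) (eV a) := by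
  have hdiff : DifferentiableAt ℝ (unc (pV L a)) (t, q t, deriv q t) := by
    rw [unc_pV L hL a]
    exact ((contDiff_fderiv_apply hL (eV a)).differentiable (by simp)) _
  calc Hvq L q a b t = fderiv ℝ (unc (pV L a)) (t, q t, deriv q t) (eQ b) :=
        pQ_eq (pV L a) b t (q t) (deriv q t) hdiff
    _ = fderiv ℝ (fun p => fderiv ℝ (unc L) p (eV a)) (t, q t, deriv q t) (eQ b) := by
        rw [unc_pV L hL a]
    _ = _ := fderiv_fderiv_apply hL _ _ _

lemma Hqv_eq (L : ℝ → (Fin n → ℝ) → (Fin n → ℝ) → ℝ) (hL : ContDiff ℝ (⊤ : ℕ∞) (unc L))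
    (q : ℝ → Fin n → ℝ) (a b : Fin n) (t : ℝ) :
    Hqv L q a b t = fderiv ℝ (fderiv ℝ (unc L)) (t, q t, deriv q t) (eV b) (eQ a) := by
  have hdiff : DifferentiableAt ℝ (unc (pQ L a)) (t, q t, deriv q t) := by
    rw [unc_pQ L hL a]
    exact ((contDiff_fderiv_apply hL (eQ a)).differentiable (by simp)) _
  calc Hqv L q a b t = fderiv ℝ (unc (pQ L a)) (t, q t, deriv q t) (eV b) :=
        pV_eq (pQ L a) b t (q t) (deriv q t) hdiff
    _ = fderiv ℝ (fun p => fderiv ℝ (unc L) p (eQ a)) (t, q t, deriv q t) (eV b) := by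
        rw [unc_pQ L hL a]
    _ = _ := fderiv_fderiv_apply hL _ _ _

lemma Hqq_eq (L : ℝ → (Fin n → ℝ) → (Fin n → ℝ) → ℝ) (hL : ContDiff ℝ (⊤ : ℕ∞) (unc L))
    (q : ℝ → Fin n → ℝ) (a b : Fin n) (t : ℝ) :
    Hqq L q a b t = fderiv ℝ (fderiv ℝ (unc L)) (t, q t, deriv q t) (eQ b) (eQ a) := by
  have hdiff : DifferentiableAt ℝ (unc (pQ L a)) (t, q t, deriv q t) := by
    rw [unc_pQ L hL a]
    exact ((contDiff_fderiv_apply hL (eQ a)).differentiable (by simp)) _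
  calc Hqq L q a b t = fderiv ℝ (unc (pQ L a)) (t, q t, deriv q t) (eQ b) :=
        pQ_eq (pQ L a) b t (q t) (deriv q t) hdiff
    _ = fderiv ℝ (fun p => fderiv ℝ (unc L) p (eQ a)) (t, q t, deriv q t) (eQ b) := by
        rw [unc_pQ L hL a]
    _ = _ := fderiv_fderiv_apply hL _ _ _

lemma sum_swap_aux (x y : Fin n → ℝ) (M N : Fin n → Fin n → ℝ)
    (h : ∀ a b, M a b = N b a) :
    ∑ a, ∑ b, x a * (M a b * y b) = ∑ a, ∑ b, y a * (N a b * x b) := by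
  rw [Finset.sum_comm]
  exact Finset.sum_congr rfl fun b _ => Finset.sum_congr rfl fun a _ => by rw [h a b]; ring

lemma algebra_cancel (H1 H2 H3 H4 : Fin n → Fin n → ℝ)
    (h1 : ∀ a b, H1 a b = H1 b a) (h4 : ∀ a b, H4 a b = H4 b a)
    (h23 : ∀ a b, H2 a b = H3 b a) (v dv w dw : Fin n → ℝ) :
    ∑ a, (dv a * ((∑ b, H1 a b * dw b) + ∑ b, H2 a b * w b)
      + v a * ((∑ b, H3 a b * dw b) + ∑ b, H4 a b * w b))
    = ∑ a, (dw a * ((∑ b, H1 a b * dv b) + ∑ b, H2 a b * v b)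
      + w a * ((∑ b, H3 a b * dv b) + ∑ b, H4 a b * v b)) := by
  have expand : ∀ (x z y u : Fin n → ℝ),
      ∑ a, (x a * ((∑ b, H1 a b * y b) + ∑ b, H2 a b * u b)
        + z a * ((∑ b, H3 a b * y b) + ∑ b, H4 a b * u b))
      = (∑ a, ∑ b, x a * (H1 a b * y b)) + (∑ a, ∑ b, x a * (H2 a b * u b))
        + ((∑ a, ∑ b, z a * (H3 a b * y b)) + (∑ a, ∑ b, z a * (H4 a b * u b))) := by
    intro x z y u
    rw [← Finset.sum_add_distrib, ← Finset.sum_add_distrib, ← Finset.sum_add_distrib]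
    refine Finset.sum_congr rfl fun a _ => ?_
    rw [mul_add, mul_add, Finset.mul_sum, Finset.mul_sum, Finset.mul_sum, Finset.mul_sum]
  rw [expand dv v dw w, expand dw w dv v,
    sum_swap_aux dv dw H1 H1 h1, sum_swap_aux dv w H2 H3 h23,
    sum_swap_aux v dw H3 H2 (fun a b => (h23 b a).symm), sum_swap_aux v w H4 H4 h4]
  abel

end PreSym

/-- Along a solution `q` of the Euler–Lagrange equations of a smooth Lagrangian `L`,
the presymplectic pairing
`Ω(t) = ⟨v, H_vv·w' + H_vq·w⟩ − ⟨w, H_vv·v' + H_vq·v⟩`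
of two smooth solutions `v`, `w` of the linearized Euler–Lagrange equations
is constant in `t`. -/
theorem presymplectic_pairing_constant {n : ℕ}
    (L : ℝ → (Fin n → ℝ) → (Fin n → ℝ) → ℝ)
    (hL : ContDiff ℝ (⊤ : ℕ∞) (fun p : ℝ × (Fin n → ℝ) × (Fin n → ℝ) => L p.1 p.2.1 p.2.2))
    (q : ℝ → Fin n → ℝ) (hq : ContDiff ℝ (⊤ : ℕ∞) q)
    (hqEL : ∀ (a : Fin n) (t : ℝ), EL L q a t = 0)
    (v w : ℝ → Fin n → ℝ) (hv : ContDiff ℝ (⊤ : ℕ∞) v) (hw : ContDiff ℝ (⊤ : ℕ∞) w)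
    (hvlin : IsLinearizedELSolution L q v) (hwlin : IsLinearizedELSolution L q w) :
    ∀ t₁ t₂ : ℝ,
      ((∑ a, v t₁ a * linMom L q w a t₁) - ∑ a, w t₁ a * linMom L q v a t₁) =
      ((∑ a, v t₂ a * linMom L q w a t₂) - ∑ a, w t₂ a * linMom L q v a t₂) := by
  intro t₁ t₂
  have hF : ContDiff ℝ (⊤ : ℕ∞) (PreSym.unc L) := hL
  have hq' : ContDiff ℝ ∞ q := hq.of_le (by simp)
  have hdq : ContDiff ℝ ∞ (deriv q) := (contDiff_infty_iff_deriv.mp hq').2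
  have hc : ContDiff ℝ ∞ (fun t : ℝ => ((t, q t, deriv q t) : ℝ × (Fin n → ℝ) × (Fin n → ℝ))) :=
    contDiff_id.prodMk (hq'.prodMk hdq)
  -- symmetry of Hessians
  have symvv : ∀ (a b : Fin n) (t : ℝ), Hvv L q a b t = Hvv L q b a t := fun a b t => by
    rw [PreSym.Hvv_eq L hF q a b t, PreSym.Hvv_eq L hF q b a t, PreSym.snd_symm hF]
  have symqq : ∀ (a b : Fin n) (t : ℝ), Hqq L q a b t = Hqq L q b a t := fun a b t => by
    rw [PreSym.Hqq_eq L hF q a b t, PreSym.Hqq_eq L hF q b a t, PreSym.snd_symm hF]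
  have symvq : ∀ (a b : Fin n) (t : ℝ), Hvq L q a b t = Hqv L q b a t := fun a b t => by
    rw [PreSym.Hvq_eq L hF q a b t, PreSym.Hqv_eq L hF q b a t, PreSym.snd_symm hF]
  -- differentiability of the Hessian coefficients
  have hd2 : ∀ u u' : ℝ × (Fin n → ℝ) × (Fin n → ℝ),
      Differentiable ℝ fun t : ℝ => fderiv ℝ (fderiv ℝ (PreSym.unc L)) (t, q t, deriv q t) u u' := by
    intro u u'
    have h0 : ContDiff ℝ (⊤ : ℕ∞) fun x => fderiv ℝ (fderiv ℝ (PreSym.unc L)) x u u' :=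
      (((hF.fderiv_right (m := (⊤ : ℕ∞)) (by simp)).fderiv_right (m := (⊤ : ℕ∞)) (by simp)).clm_apply contDiff_const).clm_apply
        contDiff_const
    exact (((h0.of_le (by simp)).comp hc).differentiable (by norm_num))
  have hHvvD : ∀ a b : Fin n, Differentiable ℝ (Hvv L q a b) := fun a b => by
    have : Hvv L q a b = fun t =>
        fderiv ℝ (fderiv ℝ (PreSym.unc L)) (t, q t, deriv q t) (PreSym.eV b) (PreSym.eV a) :=
      funext fun t => PreSym.Hvv_eq L hF q a b t
    rw [this]; exact hd2 _ _
  have hHvqD : ∀ a b : Fin n, Differentiable ℝ (Hvq L q a b) := fun a b => by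
    have : Hvq L q a b = fun t =>
        fderiv ℝ (fderiv ℝ (PreSym.unc L)) (t, q t, deriv q t) (PreSym.eQ b) (PreSym.eV a) :=
      funext fun t => PreSym.Hvq_eq L hF q a b t
    rw [this]; exact hd2 _ _
  -- differentiability of components of v, w and their derivatives
  have hvb : ∀ b : Fin n, Differentiable ℝ fun t => v t b := fun b =>
    (contDiff_pi.mp (hv.of_le (by simp)) b).differentiable (n := (⊤ : ℕ∞)) (by simp)
  have hwb : ∀ b : Fin n, Differentiable ℝ fun t => w t b := fun b =>
    (contDiff_pi.mp (hw.of_le (by simp)) b).differentiable (n := (⊤ : ℕ∞)) (by simp)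
  have hdvb : ∀ b : Fin n, Differentiable ℝ fun t => deriv v t b := fun b =>
    (contDiff_pi.mp (contDiff_infty_iff_deriv.mp (hv.of_le (by simp))).2 b).differentiable (by norm_num)
  have hdwb : ∀ b : Fin n, Differentiable ℝ fun t => deriv w t b := fun b =>
    (contDiff_pi.mp (contDiff_infty_iff_deriv.mp (hw.of_le (by simp))).2 b).differentiable (by norm_num)
  -- differentiability of the linear momenta
  have hMvD : ∀ a : Fin n, Differentiable ℝ (linMom L q v a) := fun a => by
    show Differentiable ℝ fun t => (∑ b, Hvv L q a b t * deriv v t b) + ∑ b, Hvq L q a b t * v t b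
    exact (Differentiable.fun_sum fun b _ => (hHvvD a b).mul (hdvb b)).add
      (Differentiable.fun_sum fun b _ => (hHvqD a b).mul (hvb b))
  have hMwD : ∀ a : Fin n, Differentiable ℝ (linMom L q w a) := fun a => by
    show Differentiable ℝ fun t => (∑ b, Hvv L q a b t * deriv w t b) + ∑ b, Hvq L q a b t * w t b
    exact (Differentiable.fun_sum fun b _ => (hHvvD a b).mul (hdwb b)).add
      (Differentiable.fun_sum fun b _ => (hHvqD a b).mul (hwb b))
  -- the presymplectic pairing has zero derivative everywhere
  have key : ∀ t : ℝ, HasDerivAt (fun t =>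
      ((∑ a, v t a * linMom L q w a t) - ∑ a, w t a * linMom L q v a t)) 0 t := by
    intro t
    have hva : ∀ a : Fin n, HasDerivAt (fun s => v s a) (deriv v t a) t := fun a =>
      hasDerivAt_pi.mp ((hv.differentiable (by simp) t).hasDerivAt) a
    have hwa : ∀ a : Fin n, HasDerivAt (fun s => w s a) (deriv w t a) t := fun a =>
      hasDerivAt_pi.mp ((hw.differentiable (by simp) t).hasDerivAt) a
    have hMw : ∀ a : Fin n, HasDerivAt (linMom L q w a)
        ((∑ b, Hqv L q a b t * deriv w t b) + ∑ b, Hqq L q a b t * w t b) t := fun a => by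
      have h := ((hMwD a) t).hasDerivAt
      rwa [hwlin a t] at h
    have hMv : ∀ a : Fin n, HasDerivAt (linMom L q v a)
        ((∑ b, Hqv L q a b t * deriv v t b) + ∑ b, Hqq L q a b t * v t b) t := fun a => by
      have h := ((hMvD a) t).hasDerivAt
      rwa [hvlin a t] at h
    have H1 : HasDerivAt (fun t => ∑ a, v t a * linMom L q w a t)
        (∑ a, (deriv v t a * linMom L q w a t +
          v t a * ((∑ b, Hqv L q a b t * deriv w t b) + ∑ b, Hqq L q a b t * w t b))) t :=
      HasDerivAt.fun_sum fun a _ => (hva a).mul (hMw a)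
    have H2 : HasDerivAt (fun t => ∑ a, w t a * linMom L q v a t)
        (∑ a, (deriv w t a * linMom L q v a t +
          w t a * ((∑ b, Hqv L q a b t * deriv v t b) + ∑ b, Hqq L q a b t * v t b))) t :=
      HasDerivAt.fun_sum fun a _ => (hwa a).mul (hMv a)
    have H := H1.sub H2
    have hzero : (∑ a, (deriv v t a * linMom L q w a t +
          v t a * ((∑ b, Hqv L q a b t * deriv w t b) + ∑ b, Hqq L q a b t * w t b))) -
        (∑ a, (deriv w t a * linMom L q v a t +
          w t a * ((∑ b, Hqv L q a b t * deriv v t b) + ∑ b, Hqq L q a b t * v t b))) = 0 := by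
      rw [sub_eq_zero]
      have := PreSym.algebra_cancel (fun a b => Hvv L q a b t) (fun a b => Hvq L q a b t)
        (fun a b => Hqv L q a b t) (fun a b => Hqq L q a b t)
        (fun a b => symvv a b t) (fun a b => symqq a b t) (fun a b => symvq a b t)
        (fun a => v t a) (fun a => deriv v t a) (fun a => w t a) (fun a => deriv w t a)
      simpa [linMom] using this
    rwa [hzero] at H
  have hdiffΩ : Differentiable ℝ (fun t =>
      ((∑ a, v t a * linMom L q w a t) - ∑ a, w t a * linMom L q v a t)) :=
    fun t => (key t).differentiableAt
  exact is_const_of_deriv_eq_zero hdiffΩ (fun t => (key t).deriv) t₁ t₂
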